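/- arXiv:1307.1877 — 4 statements merged into one kernel-verified Lean document; each statement's English description precedes it below -/
import Mathlib

section
/- Let π: M → B be a Riemannian submersion with totally geodesic fibers, with n = dim M and b = dim B. Then for any isometric immersion of M into a Riemannian m-manifold R^m(ε) of constant sectional curvature ε, the submersion invariant δ̆_π = τ − τ(ℋ) − τ(𝒱) satisfies δ̆_π ≤ (n²/4) H² + b(n − b) ε at every point of M. -/
open scoped InnerProductSpace RealInnerProductSpace BigOperators

noncomputable section

/-- The model Euclidean `m`-space. -/
abbrev Euc (m : ℕ) : Type := EuclideanSpace ℝ (Fin m)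

/-- The scalar curvature `τ(L)` of a linear subspace `L`, computed from a scalar-valued
curvature tensor `R` (convention: the sectional curvature of the plane spanned by an
orthonormal pair `u, v` is `R u v v u`) using the standard orthonormal basis of `L`. -/
def tauSub {m : ℕ} (R : Euc m → Euc m → Euc m → Euc m → ℝ) (L : Submodule ℝ (Euc m)) : ℝ :=
  ∑ i : Fin (Module.finrank ℝ L), ∑ j : Fin (Module.finrank ℝ L),
    if i < j then
      R (stdOrthonormalBasis ℝ L i : Euc m) (stdOrthonormalBasis ℝ L j : Euc m)
        (stdOrthonormalBasis ℝ L j : Euc m) (stdOrthonormalBasis ℝ L i : Euc m)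
    else 0

/-- `STuple n l` : the (unordered) tuple `l` belongs to `𝒮(n)`, i.e. all its entries are
integers `≥ 2` which are `< n`, and their sum is at most `n`. -/
def STuple (n : ℕ) (l : List ℕ) : Prop :=
  (∀ a ∈ l, 2 ≤ a) ∧ (∀ a ∈ l, a < n) ∧ l.sum ≤ n

/-- The coefficient `c(n₁,…,n_k)`. -/
def cCoef (n : ℕ) (l : List ℕ) : ℝ :=
  ((n : ℝ) ^ 2 * ((n : ℝ) + l.length - 1 - (l.sum : ℝ))) /
    (2 * ((n : ℝ) + l.length - (l.sum : ℝ)))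

/-- The coefficient `b(n₁,…,n_k)`. -/
def bCoef (n : ℕ) (l : List ℕ) : ℝ :=
  ((n : ℝ) * ((n : ℝ) - 1) - (l.map fun a => (a : ℝ) * ((a : ℝ) - 1)).sum) / 2

/-- The set of values `τ(L₁) + ⋯ + τ(L_k)` where `L₁, …, L_k` run over all mutually
orthogonal linear subspaces of `T₀` with `dim Lⱼ = nⱼ`. -/
def tauSums {m : ℕ} (R : Euc m → Euc m → Euc m → Euc m → ℝ)
    (T₀ : Submodule ℝ (Euc m)) (l : List ℕ) : Set ℝ :=
  { s | ∃ L : Fin l.length → Submodule ℝ (Euc m),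
      (∀ i, L i ≤ T₀) ∧
      (∀ i j, i ≠ j → ∀ x ∈ L i, ∀ y ∈ L j, ⟪x, y⟫_ℝ = 0) ∧
      (∀ i, Module.finrank ℝ (L i) = l.get i) ∧
      s = ∑ i, tauSub R (L i) }

/-- The δ-invariant `δ(n₁,…,n_k)` of the "tangent space" `T₀` (with curvature tensor `R`). -/
def deltaInv {m : ℕ} (R : Euc m → Euc m → Euc m → Euc m → ℝ)
    (T₀ : Submodule ℝ (Euc m)) (l : List ℕ) : ℝ :=
  tauSub R T₀ - sInf (tauSums R T₀ l)

/-- The δ-invariant `δ̂(n₁,…,n_k)`. -/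
def deltaHat {m : ℕ} (R : Euc m → Euc m → Euc m → Euc m → ℝ)
    (T₀ : Submodule ℝ (Euc m)) (l : List ℕ) : ℝ :=
  tauSub R T₀ - sSup (tauSums R T₀ l)

/-- Pointwise data of an isometric immersion of a Riemannian `n`-manifold (with point set
`Pt`) into a Riemannian `m`-manifold: at every point, a tangent `n`-plane inside the model
Euclidean `m`-space, a (symmetric, normal-valued) second fundamental form, the curvature
tensor of the ambient manifold and the induced curvature tensor of the submanifold, the
two being related by the equation of Gauss. -/
structure ImmersionData (n m : ℕ) (Pt : Type*) where
  tang : Pt → Submodule ℝ (Euc m)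
  dim_tang : ∀ p, Module.finrank ℝ (tang p) = n
  sff : Pt → Euc m →ₗ[ℝ] Euc m →ₗ[ℝ] Euc m
  sff_symm : ∀ p x y, sff p x y = sff p y x
  sff_normal : ∀ p x y, sff p x y ∈ (tang p)ᗮ
  ambR : Pt → Euc m → Euc m → Euc m → Euc m → ℝ
  indR : Pt → Euc m → Euc m → Euc m → Euc m → ℝ
  gauss : ∀ p x y z w, x ∈ tang p → y ∈ tang p → z ∈ tang p → w ∈ tang p →
    indR p x y z w =
      ambR p x y z w + ⟪sff p x w, sff p y z⟫_ℝ - ⟪sff p x z, sff p y w⟫_ℝ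

namespace ImmersionData

variable {n m : ℕ} {Pt : Type*} (I : ImmersionData n m Pt)

/-- The mean curvature vector `H⃗ = (1/n) trace h`. -/
def meanCurv (p : Pt) : Euc m :=
  (n : ℝ)⁻¹ • ∑ i : Fin (Module.finrank ℝ (I.tang p)),
    I.sff p (stdOrthonormalBasis ℝ (I.tang p) i : Euc m)
      (stdOrthonormalBasis ℝ (I.tang p) i : Euc m)

/-- The squared mean curvature `H²`. -/
def H2 (p : Pt) : ℝ := ‖I.meanCurv p‖ ^ 2

/-- The δ-invariant `δ(n₁,…,n_k)(p)` of the submanifold. -/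
def delta (l : List ℕ) (p : Pt) : ℝ := deltaInv (I.indR p) (I.tang p) l

/-- `max K̃(p)` : the maximum of the ambient sectional curvature restricted to 2-plane
sections of the tangent space at `p`. -/
def maxAmbK (p : Pt) : ℝ :=
  sSup { c | ∃ u v : Euc m, u ∈ I.tang p ∧ v ∈ I.tang p ∧
    ‖u‖ = 1 ∧ ‖v‖ = 1 ∧ ⟪u, v⟫_ℝ = 0 ∧ c = I.ambR p u v v u }

/-- The ambient manifold is a space form of constant sectional curvature `ε`. -/
def SpaceForm (ε : ℝ) : Prop :=
  ∀ p x y z w, I.ambR p x y z w =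
    ε * (⟪x, w⟫_ℝ * ⟪y, z⟫_ℝ - ⟪x, z⟫_ℝ * ⟪y, w⟫_ℝ)

/-- The immersion is minimal. -/
def Minimal : Prop := ∀ p, I.meanCurv p = 0

/-- The trace of the second fundamental form restricted to a subspace `L`. -/
def traceSff (p : Pt) (L : Submodule ℝ (Euc m)) : Euc m :=
  ∑ i : Fin (Module.finrank ℝ L),
    I.sff p (stdOrthonormalBasis ℝ L i : Euc m) (stdOrthonormalBasis ℝ L i : Euc m)

end ImmersionData

/-- Index `a` (within `0, …, n-1`) belongs to block `blkOf l a` of the partition of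
`{0,…,n-1}` into consecutive blocks of sizes `l.get 0, l.get 1, …` followed by one last
block consisting of the remaining indices (`blkOf l a = l.length` on the last block). -/
def blkOf (l : List ℕ) (a : ℕ) : ℕ :=
  ((List.range l.length).filter fun j => (l.take (j + 1)).sum ≤ a).length

/-- Condition (a) in the equality case of the fundamental inequality: there is an adapted
orthonormal basis `e₁, …, e_m` of the ambient tangent space at `p`, whose first `n` vectors
are tangent, with respect to which all shape operators `A_{e_r}`, `r = n+1, …, m`, take the
block diagonal form `diag(A₁ʳ, …, A_kʳ, μ_r I)` with `trace A₁ʳ = ⋯ = trace A_kʳ = μ_r`. -/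
def ImmersionData.ShapeAdapted {n m : ℕ} {Pt : Type*} (I : ImmersionData n m Pt)
    (l : List ℕ) (p : Pt) : Prop :=
  ∃ e : OrthonormalBasis (Fin m) ℝ (Euc m),
    (∀ i : Fin m, (i : ℕ) < n → e i ∈ I.tang p) ∧
    ∀ r : Fin m, n ≤ (r : ℕ) → ∃ μ : ℝ,
      (∀ a b : Fin m, (a : ℕ) < n → (b : ℕ) < n → blkOf l a ≠ blkOf l b →
        ⟪I.sff p (e a) (e b), e r⟫_ℝ = 0) ∧
      (∀ a b : Fin m, (a : ℕ) < n → (b : ℕ) < n →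
        blkOf l a = l.length → blkOf l b = l.length →
        ⟪I.sff p (e a) (e b), e r⟫_ℝ = if a = b then μ else 0) ∧
      (∀ j, j < l.length →
        (∑ a : Fin m, if (a : ℕ) < n ∧ blkOf l (a : ℕ) = j then
          ⟪I.sff p (e a) (e a), e r⟫_ℝ else 0) = μ)


/-- A Riemannian submersion `π : M → B` (with totally geodesic fibers) on an
isometrically immersed Riemannian `n`-manifold `M`: at every point the tangent space
splits orthogonally into the vertical distribution `𝒱` (the kernel of the differential
`dπ` of the submersion) of dimension `n - b` and the horizontal distribution `ℋ` of
dimension `b`, on which `dπ` preserves lengths. -/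
structure SubmersionImmersion (n b m : ℕ) (Pt Bs : Type*)
    extends ImmersionData n m Pt where
  π : Pt → Bs
  π_surj : Function.Surjective π
  dπ : Pt → Euc m →ₗ[ℝ] Euc b
  Hdist : Pt → Submodule ℝ (Euc m)
  Vdist : Pt → Submodule ℝ (Euc m)
  V_def : ∀ p, Vdist p = tang p ⊓ LinearMap.ker (dπ p)
  H_le : ∀ p, Hdist p ≤ tang p
  HV_orth : ∀ p, ∀ x ∈ Hdist p, ∀ y ∈ Vdist p, ⟪x, y⟫_ℝ = 0
  HV_span : ∀ p, Hdist p ⊔ Vdist p = tang p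
  dim_H : ∀ p, Module.finrank ℝ (Hdist p) = b
  dim_V : ∀ p, Module.finrank ℝ (Vdist p) = n - b
  dπ_isometric : ∀ p, ∀ x ∈ Hdist p, ‖dπ p x‖ = ‖x‖

/-- The submersion invariant `δ̆_π(p) = τ(p) - τ(ℋ_p) - τ(𝒱_p)`. -/
def SubmersionImmersion.deltaPi {n b m : ℕ} {Pt Bs : Type*}
    (S : SubmersionImmersion n b m Pt Bs) (p : Pt) : ℝ :=
  tauSub (S.indR p) (S.tang p) - tauSub (S.indR p) (S.Hdist p)
    - tauSub (S.indR p) (S.Vdist p)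

/-!
Compute scalar curvatures in an orthonormal basis of `T_pM` adapted to `ℋ_p ⊕ 𝒱_p`. For a
subspace `L` of dimension `d`, the equation of Gauss in `Rᵐ(ε)` gives
`2 τ(L) = d (d - 1) ε + ‖trace h|_L‖² - ‖h|_L‖²`. Since `trace h = trace h|ℋ + trace h|𝒱` and
`‖h‖² ≥ ‖h|ℋ‖² + ‖h|𝒱‖²`, this yields `δ̆_π ≤ b (n - b) ε + ⟪trace h|ℋ, trace h|𝒱⟫`, and
`⟪x, y⟫ ≤ ‖x + y‖² / 4 = n² H² / 4`.
-/

namespace OrthonormalBasis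

variable {ι ι' E F : Type*} [Fintype ι] [Fintype ι'] [NormedAddCommGroup E]
  [InnerProductSpace ℝ E]

theorem sum_bilin_self_eq [AddCommGroup F] [Module ℝ F] (b : OrthonormalBasis ι ℝ E)
    (c : OrthonormalBasis ι' ℝ E) (B : E →ₗ[ℝ] E →ₗ[ℝ] F) :
    ∑ i, B (c i) (c i) = ∑ k, B (b k) (b k) := by
  calc ∑ i, B (c i) (c i) = ∑ i, B (∑ k, ⟪b k, c i⟫ • b k) (c i) := by
        simp only [b.sum_repr']
    _ = ∑ k, B (b k) (∑ i, ⟪c i, b k⟫ • c i) := by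
        simp only [map_sum, map_smul, LinearMap.sum_apply, LinearMap.smul_apply, real_inner_comm]
        exact Finset.sum_comm
    _ = ∑ k, B (b k) (b k) := by simp only [c.sum_repr']

theorem sum_sum_norm_sq_bilin_eq [NormedAddCommGroup F] [InnerProductSpace ℝ F]
    (b : OrthonormalBasis ι ℝ E) (c : OrthonormalBasis ι' ℝ E) (B : E →ₗ[ℝ] E →ₗ[ℝ] F) :
    ∑ i, ∑ j, ‖B (c i) (c j)‖ ^ 2 = ∑ k, ∑ l, ‖B (b k) (b l)‖ ^ 2 := by
  have h (B' : E →ₗ[ℝ] E →ₗ[ℝ] F) (x : E) :=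
    sum_bilin_self_eq b c ((innerₗ F).compl₁₂ (B' x) (B' x))
  simp only [LinearMap.compl₁₂_apply, innerₗ_apply_apply, real_inner_self_eq_norm_sq] at h
  calc ∑ i, ∑ j, ‖B (c i) (c j)‖ ^ 2 = ∑ i, ∑ l, ‖B (c i) (b l)‖ ^ 2 := by simp only [h B]
    _ = ∑ l, ∑ i, ‖B.flip (b l) (c i)‖ ^ 2 := Finset.sum_comm
    _ = ∑ l, ∑ k, ‖B.flip (b l) (b k)‖ ^ 2 := by simp only [h B.flip]
    _ = ∑ k, ∑ l, ‖B (b k) (b l)‖ ^ 2 := Finset.sum_comm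

theorem span_range_coe {W : Submodule ℝ E} (b : OrthonormalBasis ι ℝ W) :
    Submodule.span ℝ (Set.range fun i => (b i : E)) = W := by
  rw [Set.range_comp' Subtype.val b, Submodule.span_val_image_eq_iff]
  exact b.toBasis.span_eq

end OrthonormalBasis

theorem Submodule.IsOrtho.exists_orthonormalBasis_sup {ι ι' E : Type*} [Fintype ι] [Fintype ι']
    [NormedAddCommGroup E] [InnerProductSpace ℝ E] {H V : Submodule ℝ E} (hHV : H ⟂ V)
    (bH : OrthonormalBasis ι ℝ H) (bV : OrthonormalBasis ι' ℝ V) :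
    ∃ c : OrthonormalBasis (ι ⊕ ι') ℝ ↥(H ⊔ V),
      ∀ k, (c k : E) = Sum.elim (fun i => (bH i : E)) (fun j => (bV j : E)) k := by
  classical
  set u : ι ⊕ ι' → E := Sum.elim (fun i => (bH i : E)) (fun j => (bV j : E))
  have hu : Orthonormal ℝ u := by
    rw [orthonormal_iff_ite]
    rintro (i | i) (j | j)
    · simpa [u] using orthonormal_iff_ite.mp bH.orthonormal i j
    · simpa [u] using isOrtho_iff_inner_eq.mp hHV _ (bH i).2 _ (bV j).2
    · simpa [u] using isOrtho_iff_inner_eq.mp hHV.symm _ (bV i).2 _ (bH j).2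
    · simpa [u] using orthonormal_iff_ite.mp bV.orthonormal i j
  have hmem : ∀ k, u k ∈ H ⊔ V := by
    rintro (i | j)
    · exact mem_sup_left (bH i).2
    · exact mem_sup_right (bV j).2
  have hspan : span ℝ (Set.range u) = H ⊔ V := by
    rw [Set.Sum.elim_range, span_union, bH.span_range_coe, bV.span_range_coe]
  have hu' : Orthonormal ℝ fun k => (⟨u k, hmem k⟩ : ↥(H ⊔ V)) := hu.codRestrict _ hmem
  exact ⟨OrthonormalBasis.mk hu' ((span_range_subtype_eq_top_iff _ hmem).mpr hspan).ge,
    fun k => by rw [OrthonormalBasis.coe_mk]⟩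

theorem Finset.two_mul_sum_sum_ite_lt {ι : Type*} [Fintype ι] [LinearOrder ι] (g : ι → ι → ℝ)
    (hsymm : ∀ i j, g i j = g j i) (hdiag : ∀ i, g i i = 0) :
    2 * ∑ i, ∑ j, (if i < j then g i j else 0) = ∑ i, ∑ j, g i j := by
  have hswap :
      ∑ i, ∑ j, (if j < i then g i j else 0) = ∑ i, ∑ j, (if i < j then g i j else 0) := by
    rw [Finset.sum_comm]
    simp only [hsymm]
  calc 2 * ∑ i, ∑ j, (if i < j then g i j else 0)
      = ∑ i, ∑ j, ((if i < j then g i j else 0) + (if j < i then g i j else 0)) := by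
        simp only [Finset.sum_add_distrib, hswap]; ring
    _ = ∑ i, ∑ j, g i j := by
        refine Finset.sum_congr rfl fun i _ => Finset.sum_congr rfl fun j _ => ?_
        rcases lt_trichotomy i j with h | rfl | h
        · simp [h, h.not_gt]
        · simp [hdiag]
        · simp [h, h.not_gt]

theorem Fintype.sum_sum_ite_eq_zero_else {ι : Type*} [Fintype ι] [DecidableEq ι] (ε : ℝ) :
    ∑ i : ι, ∑ j : ι, (if i = j then 0 else ε) = Fintype.card ι * (Fintype.card ι - 1) * ε := by
  have hite (i j : ι) : (if i = j then 0 else ε) = ε - if i = j then ε else 0 := by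
    split_ifs <;> ring
  simp only [hite, Finset.sum_sub_distrib, Finset.sum_ite_eq, Finset.mem_univ, if_true,
    Finset.sum_const, Finset.card_univ, nsmul_eq_mul]
  ring

theorem real_inner_le_norm_add_sq_div_four {E : Type*} [NormedAddCommGroup E]
    [InnerProductSpace ℝ E] (x y : E) : ⟪x, y⟫_ℝ ≤ ‖x + y‖ ^ 2 / 4 := by
  nlinarith [norm_add_sq_real x y, norm_sub_sq_real x y, sq_nonneg ‖x - y‖]

namespace ImmersionData

variable {n m : ℕ} {Pt : Type*} (I : ImmersionData n m Pt)

def sffNormSq (p : Pt) (L : Submodule ℝ (Euc m)) : ℝ :=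
  ∑ i : Fin (Module.finrank ℝ L), ∑ j : Fin (Module.finrank ℝ L),
    ‖I.sff p (stdOrthonormalBasis ℝ L i : Euc m) (stdOrthonormalBasis ℝ L j : Euc m)‖ ^ 2

theorem sq_mul_H2 (p : Pt) : (n : ℝ) ^ 2 * I.H2 p = ‖I.traceSff p (I.tang p)‖ ^ 2 := by
  rcases eq_or_ne n 0 with rfl | hn
  · have : IsEmpty (Fin (Module.finrank ℝ (I.tang p))) := by
      rw [I.dim_tang p]; infer_instance
    simp [traceSff]
  · rw [H2, show I.meanCurv p = (n : ℝ)⁻¹ • I.traceSff p (I.tang p) from rfl, norm_smul,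
      mul_pow, ← mul_assoc, norm_inv, RCLike.norm_natCast, ← mul_pow,
      mul_inv_cancel₀ (Nat.cast_ne_zero.mpr hn), one_pow, one_mul]

theorem two_mul_tauSub_eq {ε : ℝ} (hsf : I.SpaceForm ε) (p : Pt) {L : Submodule ℝ (Euc m)}
    (hL : L ≤ I.tang p) :
    2 * tauSub (I.indR p) L = (Module.finrank ℝ L : ℝ) * (Module.finrank ℝ L - 1) * ε
      + ‖I.traceSff p L‖ ^ 2 - I.sffNormSq p L := by
  set e : Fin (Module.finrank ℝ L) → Euc m := fun i => (stdOrthonormalBasis ℝ L i : Euc m)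
  set h := fun i j => I.sff p (e i) (e j)
  have hsymm (i j) : h i j = h j i := I.sff_symm p (e i) (e j)
  have hon (i j) : ⟪e i, e j⟫_ℝ = if i = j then 1 else 0 := by
    simpa [e] using orthonormal_iff_ite.mp (stdOrthonormalBasis ℝ L).orthonormal i j
  have hmem (k) : e k ∈ I.tang p := hL (stdOrthonormalBasis ℝ L k).2
  have hsec (i j) : I.indR p (e i) (e j) (e j) (e i)
      = (if i = j then 0 else ε) + ⟪h i i, h j j⟫_ℝ - ‖h i j‖ ^ 2 := by
    rw [I.gauss p _ _ _ _ (hmem i) (hmem j) (hmem j) (hmem i), hsf p, hon, hon, hon, hon,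
      I.sff_symm p (e j) (e i), real_inner_self_eq_norm_sq]
    by_cases hij : i = j
    · subst hij; simp
    · simp only [hij, Ne.symm hij, if_false, if_true]; ring
  have htrace : ∑ i, ∑ j, ⟪h i i, h j j⟫_ℝ = ‖∑ i, h i i‖ ^ 2 := by
    rw [← real_inner_self_eq_norm_sq, sum_inner]
    simp only [inner_sum]
  have htau : tauSub (I.indR p) L
      = ∑ i, ∑ j, if i < j then I.indR p (e i) (e j) (e j) (e i) else 0 := rfl
  have htr : I.traceSff p L = ∑ i, h i i := rfl
  have hsum : I.sffNormSq p L = ∑ i, ∑ j, ‖h i j‖ ^ 2 := rfl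
  rw [htau, htr, hsum]
  simp only [hsec]
  rw [Finset.two_mul_sum_sum_ite_lt _
    (fun i j => by rw [real_inner_comm, hsymm i j]; simp only [eq_comm])
    (fun i => by simp)]
  simp only [Finset.sum_add_distrib, Finset.sum_sub_distrib, Fintype.sum_sum_ite_eq_zero_else,
    Fintype.card_fin, htrace]

theorem traceSff_sup (p : Pt) {H V : Submodule ℝ (Euc m)} (hHV : H ⟂ V) :
    I.traceSff p (H ⊔ V) = I.traceSff p H + I.traceSff p V := by
  obtain ⟨c, hc⟩ := hHV.exists_orthonormalBasis_sup (stdOrthonormalBasis ℝ H)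
    (stdOrthonormalBasis ℝ V)
  have := (stdOrthonormalBasis ℝ ↥(H ⊔ V)).sum_bilin_self_eq c
    ((I.sff p).compl₁₂ (H ⊔ V).subtype (H ⊔ V).subtype)
  simp only [LinearMap.compl₁₂_apply, Submodule.subtype_apply, hc, Fintype.sum_sum_type,
    Sum.elim_inl, Sum.elim_inr] at this
  rw [traceSff, ← this]
  rfl

theorem sffNormSq_add_le_sup (p : Pt) {H V : Submodule ℝ (Euc m)} (hHV : H ⟂ V) :
    I.sffNormSq p H + I.sffNormSq p V ≤ I.sffNormSq p (H ⊔ V) := by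
  obtain ⟨c, hc⟩ := hHV.exists_orthonormalBasis_sup (stdOrthonormalBasis ℝ H)
    (stdOrthonormalBasis ℝ V)
  have := (stdOrthonormalBasis ℝ ↥(H ⊔ V)).sum_sum_norm_sq_bilin_eq c
    ((I.sff p).compl₁₂ (H ⊔ V).subtype (H ⊔ V).subtype)
  simp only [LinearMap.compl₁₂_apply, Submodule.subtype_apply, hc, Fintype.sum_sum_type,
    Sum.elim_inl, Sum.elim_inr, Finset.sum_add_distrib] at this
  rw [sffNormSq, sffNormSq, sffNormSq, ← this, ← sub_nonneg]
  ring_nf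
  positivity

end ImmersionData

theorem submersion_delta_inequality_general {n b m : ℕ} {Pt Bs : Type*}
    (S : SubmersionImmersion n b m Pt Bs) (ε : ℝ)
    (hsf : S.toImmersionData.SpaceForm ε) (p : Pt) :
    S.deltaPi p ≤ ((n : ℝ) ^ 2 / 4) * S.toImmersionData.H2 p +
      (b : ℝ) * ((n : ℝ) - (b : ℝ)) * ε := by
  have hHV : S.Hdist p ⟂ S.Vdist p := Submodule.isOrtho_iff_inner_eq.mpr (S.HV_orth p)
  have hbn : b ≤ n := by
    simpa only [S.dim_H p, S.dim_tang p] using Submodule.finrank_mono (S.H_le p)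
  have hτT := S.two_mul_tauSub_eq hsf p le_rfl
  have hτH := S.two_mul_tauSub_eq hsf p (S.H_le p)
  have hτV := S.two_mul_tauSub_eq hsf p (S.HV_span p ▸ le_sup_right)
  rw [S.dim_tang p] at hτT
  rw [S.dim_H p] at hτH
  rw [S.dim_V p, Nat.cast_sub hbn] at hτV
  have htr := S.traceSff_sup p hHV
  have hsq := S.sffNormSq_add_le_sup p hHV
  rw [S.HV_span p] at htr hsq
  have hH2 := S.sq_mul_H2 p
  rw [htr] at hH2 hτT
  have hinner := real_inner_le_norm_add_sq_div_four (S.traceSff p (S.Hdist p))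
    (S.traceSff p (S.Vdist p))
  rw [SubmersionImmersion.deltaPi]
  linarith [norm_add_sq_real (S.traceSff p (S.Hdist p)) (S.traceSff p (S.Vdist p))]

/-- **Theorem 13.3 (Chen)**: let `π : M → B` be a Riemannian submersion with totally
geodesic fibers, `n = dim M`, `b = dim B`.  For any isometric immersion of `M` into a
Riemannian `m`-manifold `Rᵐ(ε)` of constant sectional curvature `ε`, the submersion
invariant satisfies `δ̆_π ≤ (n²/4) H² + b(n-b) ε` at every point of `M`. -/
theorem submersion_delta_inequality {n b m : ℕ} {Pt Bs : Type*}
    (hb : 0 < b) (hbn : b < n)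
    (S : SubmersionImmersion n b m Pt Bs) (ε : ℝ)
    (hsf : S.toImmersionData.SpaceForm ε) (p : Pt) :
    S.deltaPi p ≤ ((n : ℝ) ^ 2 / 4) * S.toImmersionData.H2 p +
      (b : ℝ) * ((n : ℝ) - (b : ℝ)) * ε :=
  submersion_delta_inequality_general S ε hsf p
end
end

section
/- Let x: M^n → R^m(ε) be an isometric immersion of a Riemannian n-manifold into a Riemannian space form of constant sectional curvature ε. Then: (1) for each unit tangent vector X ∈ T_pM, Ric(X) ≤ (n²/4) H² + (n−1) ε; (2) if H(p) = 0, then a unit tangent vector X at p attains equality in (1) if and only if X lies in the relative null space N_p = {X ∈ T_pM : h(X,Y) = 0 for all Y ∈ T_pM}; (3) equality in (1) holds for all unit tangent vectors at p if and only if either p is a totally geodesic point, or n = 2 and p is a totally umbilical point. -/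
open scoped InnerProductSpace RealInnerProductSpace BigOperators

noncomputable section

namespace ImmersionData

variable {n m : ℕ} {Pt : Type*} (I : ImmersionData n m Pt)

/-- The Ricci curvature `Ric(X) = ∑ᵢ K(X ∧ eᵢ)` of a unit tangent vector `X`. -/
def ricciOf (p : Pt) (X : Euc m) : ℝ :=
  ∑ i : Fin (Module.finrank ℝ (I.tang p)),
    I.indR p X (stdOrthonormalBasis ℝ (I.tang p) i : Euc m)
      (stdOrthonormalBasis ℝ (I.tang p) i : Euc m) X

/-- `p` is a totally geodesic point: the second fundamental form vanishes at `p`. -/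
def TotallyGeodesicAt (p : Pt) : Prop :=
  ∀ x ∈ I.tang p, ∀ y ∈ I.tang p, I.sff p x y = 0

/-- `p` is a totally umbilical point: `h(X,Y) = ⟨X,Y⟩ H⃗` at `p`. -/
def TotallyUmbilicalAt (p : Pt) : Prop :=
  ∀ x ∈ I.tang p, ∀ y ∈ I.tang p, I.sff p x y = ⟪x, y⟫_ℝ • I.meanCurv p

end ImmersionData

section Aux

open Finset

variable {n m : ℕ} {Pt : Type*} (I : ImmersionData n m Pt)

/-- Expansion of a tangent vector in the standard orthonormal basis of the tangent space. -/
lemma tang_expand (p : Pt) {X : Euc m} (hX : X ∈ I.tang p) :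
    ∑ i : Fin (Module.finrank ℝ (I.tang p)),
      ⟪(stdOrthonormalBasis ℝ (I.tang p) i : Euc m), X⟫_ℝ •
        (stdOrthonormalBasis ℝ (I.tang p) i : Euc m) = X := by
  have h := (stdOrthonormalBasis ℝ (I.tang p)).sum_repr' (⟨X, hX⟩ : I.tang p)
  have h2 := congrArg (Subtype.val) h
  simpa [Submodule.coe_inner] using h2

lemma tang_parseval (p : Pt) {X : Euc m} (hX : X ∈ I.tang p) :
    ∑ i : Fin (Module.finrank ℝ (I.tang p)),
      ⟪(stdOrthonormalBasis ℝ (I.tang p) i : Euc m), X⟫_ℝ ^ 2 = ‖X‖ ^ 2 := by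
  rw [← real_inner_self_eq_norm_sq]
  nth_rewrite 2 [← tang_expand I p hX]
  rw [sum_inner]
  refine Finset.sum_congr rfl fun i _ => ?_
  rw [real_inner_smul_left, sq]

end Aux

section Aux2

open Finset

variable {n m : ℕ} {Pt : Type*} (I : ImmersionData n m Pt)

/-- Expansion of the second fundamental form in the second argument. -/
lemma sff_expand (p : Pt) (X : Euc m) {Y : Euc m} (hY : Y ∈ I.tang p) :
    I.sff p X Y = ∑ i : Fin (Module.finrank ℝ (I.tang p)),
      ⟪(stdOrthonormalBasis ℝ (I.tang p) i : Euc m), Y⟫_ℝ •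
        I.sff p X (stdOrthonormalBasis ℝ (I.tang p) i : Euc m) := by
  conv_lhs => rw [← tang_expand I p hY]
  rw [map_sum]
  exact Finset.sum_congr rfl fun i _ => by rw [map_smul]

lemma nsmul_meanCurv (p : Pt) (hn : n ≠ 0) :
    (n : ℝ) • I.meanCurv p = ∑ i : Fin (Module.finrank ℝ (I.tang p)),
      I.sff p (stdOrthonormalBasis ℝ (I.tang p) i : Euc m)
        (stdOrthonormalBasis ℝ (I.tang p) i : Euc m) := by
  rw [ImmersionData.meanCurv, smul_smul, mul_inv_cancel₀ (by exact_mod_cast hn), one_smul]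

lemma finrank_pos_of_unit (p : Pt) {X : Euc m} (hX : X ∈ I.tang p) (hX1 : ‖X‖ = 1) :
    n ≠ 0 := by
  intro h
  have hfr : Module.finrank ℝ (I.tang p) = 0 := by rw [I.dim_tang p, h]
  have : I.tang p = ⊥ := Submodule.finrank_eq_zero.mp hfr
  rw [this, Submodule.mem_bot] at hX
  rw [hX] at hX1; simp at hX1

/-- The fundamental formula for the Ricci curvature of a unit tangent vector. -/
lemma ricci_formula {ε : ℝ} (hsf : I.SpaceForm ε) (p : Pt) {X : Euc m}
    (hX : X ∈ I.tang p) (hX1 : ‖X‖ = 1) :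
    I.ricciOf p X = ((n : ℝ) - 1) * ε
      + (n : ℝ) * ⟪I.sff p X X, I.meanCurv p⟫_ℝ
      - ∑ i : Fin (Module.finrank ℝ (I.tang p)),
          ‖I.sff p X (stdOrthonormalBasis ℝ (I.tang p) i : Euc m)‖ ^ 2 := by
  have hn := finrank_pos_of_unit I p hX hX1
  set e := stdOrthonormalBasis ℝ (I.tang p) with he_def
  have he : ∀ i, ((e i : Euc m)) ∈ I.tang p := fun i => (e i).2
  have hXX : ⟪X, X⟫_ℝ = 1 := by rw [real_inner_self_eq_norm_sq, hX1]; norm_num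
  have hee : ∀ i, ⟪(e i : Euc m), (e i : Euc m)⟫_ℝ = 1 := by
    intro i
    rw [real_inner_self_eq_norm_sq]
    have : ‖e i‖ = 1 := (stdOrthonormalBasis ℝ (I.tang p)).orthonormal.1 i
    rw [show ‖(e i : Euc m)‖ = ‖e i‖ from rfl, this]; norm_num
  have hterm : ∀ i, I.indR p X (e i : Euc m) (e i : Euc m) X
      = ε * (1 - ⟪(e i : Euc m), X⟫_ℝ ^ 2)
        + ⟪I.sff p X X, I.sff p (e i : Euc m) (e i : Euc m)⟫_ℝ
        - ‖I.sff p X (e i : Euc m)‖ ^ 2 := by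
    intro i
    rw [I.gauss p _ _ _ _ hX (he i) (he i) hX, hsf, hXX, hee i,
      I.sff_symm p (e i : Euc m) X, real_inner_self_eq_norm_sq,
      real_inner_comm X (e i : Euc m)]
    ring
  rw [ImmersionData.ricciOf]
  rw [Finset.sum_congr rfl fun i _ => hterm i]
  rw [Finset.sum_sub_distrib, Finset.sum_add_distrib, ← Finset.mul_sum,
    Finset.sum_sub_distrib, Finset.sum_const, ← inner_sum, ← nsmul_meanCurv I p hn,
    real_inner_smul_right, tang_parseval I p hX, hX1]
  have hk : ((Module.finrank ℝ (I.tang p) : ℝ)) = (n : ℝ) := by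
    exact_mod_cast congrArg Nat.cast (I.dim_tang p)
  rw [Finset.card_univ, Fintype.card_fin, nsmul_eq_mul, hk]
  ring

end Aux2

section Aux3

open Finset

variable {n m : ℕ} {Pt : Type*} (I : ImmersionData n m Pt)

/-- Completing-the-square identity. -/
lemma quad_id (v H : Euc m) (c : ℝ) :
    c * ⟪v, H⟫_ℝ - ‖v‖ ^ 2 = c ^ 2 / 4 * ‖H‖ ^ 2 - ‖v - (c / 2) • H‖ ^ 2 := by
  rw [norm_sub_sq_real, real_inner_smul_right, norm_smul, Real.norm_eq_abs, mul_pow, sq_abs]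
  ring

/-- `∑ ‖h(X, eᵢ)‖² ≥ ‖h(X,X)‖²` for a unit tangent vector `X`. -/
lemma sum_sq_ge (p : Pt) {X : Euc m} (hX : X ∈ I.tang p) (hX1 : ‖X‖ = 1) :
    ‖I.sff p X X‖ ^ 2 ≤ ∑ i : Fin (Module.finrank ℝ (I.tang p)),
      ‖I.sff p X (stdOrthonormalBasis ℝ (I.tang p) i : Euc m)‖ ^ 2 := by
  set e := stdOrthonormalBasis ℝ (I.tang p) with he_def
  set v := I.sff p X X with hv_def
  by_cases hv : v = 0
  · rw [hv, norm_zero]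
    simpa using Finset.sum_nonneg fun (i : Fin (Module.finrank ℝ (I.tang p))) _ =>
      sq_nonneg ‖I.sff p X (e i : Euc m)‖
  · set u : Euc m := ‖v‖⁻¹ • v with hu_def
    have hvn : ‖v‖ ≠ 0 := norm_ne_zero_iff.mpr hv
    have hu : ‖u‖ = 1 := by
      rw [hu_def, norm_smul, Real.norm_eq_abs, abs_inv, abs_norm, inv_mul_cancel₀ hvn]
    have key : ∑ i : Fin (Module.finrank ℝ (I.tang p)),
        ⟪(e i : Euc m), X⟫_ℝ * ⟪I.sff p X (e i : Euc m), u⟫_ℝ = ⟪v, u⟫_ℝ := by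
      rw [hv_def, sff_expand I p X hX, sum_inner]
      exact Finset.sum_congr rfl fun i _ => by rw [real_inner_smul_left]
    have hvu : ⟪v, u⟫_ℝ = ‖v‖ := by
      rw [hu_def, real_inner_smul_right, real_inner_self_eq_norm_sq]
      field_simp
    have cs1 := Finset.sum_mul_sq_le_sq_mul_sq Finset.univ
      (fun i : Fin (Module.finrank ℝ (I.tang p)) => ⟪(e i : Euc m), X⟫_ℝ)
      (fun i => ⟪I.sff p X (e i : Euc m), u⟫_ℝ)
    rw [key, hvu, tang_parseval I p hX, hX1] at cs1
    have cs2 : ∑ i : Fin (Module.finrank ℝ (I.tang p)),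
        ⟪I.sff p X (e i : Euc m), u⟫_ℝ ^ 2 ≤
        ∑ i : Fin (Module.finrank ℝ (I.tang p)), ‖I.sff p X (e i : Euc m)‖ ^ 2 := by
      refine Finset.sum_le_sum fun i _ => ?_
      have h1 : |⟪I.sff p X (e i : Euc m), u⟫_ℝ| ≤ ‖I.sff p X (e i : Euc m)‖ * ‖u‖ :=
        abs_real_inner_le_norm _ _
      rw [hu, mul_one] at h1
      calc ⟪I.sff p X (e i : Euc m), u⟫_ℝ ^ 2
          = |⟪I.sff p X (e i : Euc m), u⟫_ℝ| ^ 2 := (sq_abs _).symm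
        _ ≤ ‖I.sff p X (e i : Euc m)‖ ^ 2 := by
            exact pow_le_pow_left₀ (abs_nonneg _) h1 2
    calc ‖v‖ ^ 2 ≤ 1 ^ 2 * ∑ i : Fin (Module.finrank ℝ (I.tang p)),
          ⟪I.sff p X (e i : Euc m), u⟫_ℝ ^ 2 := cs1
      _ ≤ _ := by rw [one_pow, one_mul]; exact cs2

end Aux3

section Aux4

open Finset

variable {n m : ℕ} {Pt : Type*} (I : ImmersionData n m Pt)

/-- Master inequality and its equality characterization. -/
lemma main_est {ε : ℝ} (hsf : I.SpaceForm ε) (p : Pt) {X : Euc m}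
    (hX : X ∈ I.tang p) (hX1 : ‖X‖ = 1) :
    I.ricciOf p X ≤ ((n : ℝ) ^ 2 / 4) * I.H2 p + ((n : ℝ) - 1) * ε ∧
    (I.ricciOf p X = ((n : ℝ) ^ 2 / 4) * I.H2 p + ((n : ℝ) - 1) * ε ↔
      ((∑ i : Fin (Module.finrank ℝ (I.tang p)),
          ‖I.sff p X (stdOrthonormalBasis ℝ (I.tang p) i : Euc m)‖ ^ 2
        = ‖I.sff p X X‖ ^ 2) ∧
        I.sff p X X = ((n : ℝ) / 2) • I.meanCurv p)) := by
  have F := ricci_formula I hsf p hX hX1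
  have G := sum_sq_ge I p hX hX1
  have Q := quad_id (I.sff p X X) (I.meanCurv p) (n : ℝ)
  have hH2 : I.H2 p = ‖I.meanCurv p‖ ^ 2 := rfl
  have hD0 : (0:ℝ) ≤ ‖I.sff p X X - ((n : ℝ) / 2) • I.meanCurv p‖ ^ 2 := sq_nonneg _
  have key : ((n : ℝ) ^ 2 / 4) * I.H2 p + ((n : ℝ) - 1) * ε - I.ricciOf p X
      = ((∑ i : Fin (Module.finrank ℝ (I.tang p)),
          ‖I.sff p X (stdOrthonormalBasis ℝ (I.tang p) i : Euc m)‖ ^ 2)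
        - ‖I.sff p X X‖ ^ 2)
        + ‖I.sff p X X - ((n : ℝ) / 2) • I.meanCurv p‖ ^ 2 := by
    rw [hH2, F]
    linarith [Q]
  refine ⟨by linarith, ?_, ?_⟩
  · intro heq
    have h1 : ((∑ i : Fin (Module.finrank ℝ (I.tang p)),
          ‖I.sff p X (stdOrthonormalBasis ℝ (I.tang p) i : Euc m)‖ ^ 2)
        - ‖I.sff p X X‖ ^ 2) = 0 ∧
        ‖I.sff p X X - ((n : ℝ) / 2) • I.meanCurv p‖ ^ 2 = 0 := by
      constructor <;> linarith
    refine ⟨by linarith [h1.1], ?_⟩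
    have h3 : ‖I.sff p X X - ((n : ℝ) / 2) • I.meanCurv p‖ = 0 :=
      (pow_eq_zero_iff (two_ne_zero)).mp h1.2
    exact sub_eq_zero.mp (norm_eq_zero.mp h3)
  · rintro ⟨h1, h2⟩
    have h3 : ‖I.sff p X X - ((n : ℝ) / 2) • I.meanCurv p‖ ^ 2 = 0 := by
      rw [h2, sub_self, norm_zero]
      norm_num
    linarith

end Aux4

/-- **Chen's Ricci inequality** (Theorem 21.1): let `x : Mⁿ → Rᵐ(ε)` be an isometric
immersion of a Riemannian `n`-manifold into a space form of constant curvature `ε`.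
(1) For every unit tangent vector `X ∈ T_pM`, `Ric(X) ≤ (n²/4)H² + (n-1)ε`.
(2) If `H(p) = 0`, a unit tangent vector `X` attains equality iff `X` lies in the
relative null space `N_p` at `p`.
(3) Equality holds for all unit tangent vectors at `p` iff `p` is a totally geodesic
point, or `n = 2` and `p` is a totally umbilical point. -/
theorem ricci_inequality {n m : ℕ} {Pt : Type*} (I : ImmersionData n m Pt)
    (ε : ℝ) (hsf : I.SpaceForm ε) :
    (∀ (p : Pt), ∀ X ∈ I.tang p, ‖X‖ = 1 →
      I.ricciOf p X ≤ ((n : ℝ) ^ 2 / 4) * I.H2 p + ((n : ℝ) - 1) * ε) ∧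
    (∀ p : Pt, I.meanCurv p = 0 → ∀ X ∈ I.tang p, ‖X‖ = 1 →
      (I.ricciOf p X = ((n : ℝ) ^ 2 / 4) * I.H2 p + ((n : ℝ) - 1) * ε ↔
        ∀ Y ∈ I.tang p, I.sff p X Y = 0)) ∧
    (∀ p : Pt,
      ((∀ X ∈ I.tang p, ‖X‖ = 1 →
          I.ricciOf p X = ((n : ℝ) ^ 2 / 4) * I.H2 p + ((n : ℝ) - 1) * ε) ↔
        (I.TotallyGeodesicAt p ∨ (n = 2 ∧ I.TotallyUmbilicalAt p)))) := by
  have hmem : ∀ (p : Pt) (i : Fin (Module.finrank ℝ (I.tang p))),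
      ((stdOrthonormalBasis ℝ (I.tang p) i : Euc m)) ∈ I.tang p :=
    fun p i => (stdOrthonormalBasis ℝ (I.tang p) i).2
  have hee : ∀ (p : Pt) (i : Fin (Module.finrank ℝ (I.tang p))),
      ⟪(stdOrthonormalBasis ℝ (I.tang p) i : Euc m),
        (stdOrthonormalBasis ℝ (I.tang p) i : Euc m)⟫_ℝ = 1 := by
    intro p i
    rw [real_inner_self_eq_norm_sq]
    have : ‖stdOrthonormalBasis ℝ (I.tang p) i‖ = 1 :=
      (stdOrthonormalBasis ℝ (I.tang p)).orthonormal.1 i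
    rw [show ‖(stdOrthonormalBasis ℝ (I.tang p) i : Euc m)‖
        = ‖stdOrthonormalBasis ℝ (I.tang p) i‖ from rfl, this]
    norm_num
  refine ⟨fun p X hX hX1 => (main_est I hsf p hX hX1).1, ?_, ?_⟩
  · -- Part (2)
    intro p hH X hX hX1
    constructor
    · intro heq
      obtain ⟨h1, h2⟩ := (main_est I hsf p hX hX1).2.mp heq
      rw [hH, smul_zero] at h2
      rw [h2, norm_zero] at h1
      have hz : ∀ i : Fin (Module.finrank ℝ (I.tang p)),
          I.sff p X (stdOrthonormalBasis ℝ (I.tang p) i : Euc m) = 0 := by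
        intro i
        have hsum0 : ∑ i : Fin (Module.finrank ℝ (I.tang p)),
            ‖I.sff p X (stdOrthonormalBasis ℝ (I.tang p) i : Euc m)‖ ^ 2 = 0 := by
          rw [h1]; norm_num
        have := (Finset.sum_eq_zero_iff_of_nonneg
          (fun i _ => sq_nonneg ‖I.sff p X (stdOrthonormalBasis ℝ (I.tang p) i : Euc m)‖)).mp
          hsum0 i (Finset.mem_univ i)
        have hn0 : ‖I.sff p X (stdOrthonormalBasis ℝ (I.tang p) i : Euc m)‖ = 0 :=
          (pow_eq_zero_iff two_ne_zero).mp this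
        exact norm_eq_zero.mp hn0
      intro Y hY
      rw [sff_expand I p X hY]
      exact Finset.sum_eq_zero fun i _ => by rw [hz i, smul_zero]
    · intro hnull
      refine (main_est I hsf p hX hX1).2.mpr ⟨?_, ?_⟩
      · have hz : ∀ i : Fin (Module.finrank ℝ (I.tang p)),
            ‖I.sff p X (stdOrthonormalBasis ℝ (I.tang p) i : Euc m)‖ ^ 2 = 0 := fun i => by
          rw [hnull _ (hmem p i), norm_zero]
          norm_num
        rw [Finset.sum_congr rfl fun i _ => hz i, hnull X hX, norm_zero]
        simp
      · rw [hnull X hX, hH, smul_zero]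
  · -- Part (3)
    intro p
    constructor
    · intro hall
      by_cases hn0 : n = 0
      · left
        intro x hx y hy
        have hfr : Module.finrank ℝ (I.tang p) = 0 := by rw [I.dim_tang p, hn0]
        have hbot : I.tang p = ⊥ := Submodule.finrank_eq_zero.mp hfr
        rw [hbot, Submodule.mem_bot] at hx
        rw [hx]
        simp
      · -- polarization
        have hsq : ∀ X ∈ I.tang p, ‖X‖ = 1 →
            I.sff p X X = ((n : ℝ) / 2) • I.meanCurv p := fun X hX hX1 =>
          ((main_est I hsf p hX hX1).2.mp (hall X hX hX1)).2
        have hscale : ∀ x ∈ I.tang p,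
            I.sff p x x = ((n : ℝ) / 2 * ‖x‖ ^ 2) • I.meanCurv p := by
          intro x hx
          by_cases hx0 : x = 0
          · rw [hx0, map_zero, norm_zero]
            simp
          · have hc : ‖x‖ ≠ 0 := norm_ne_zero_iff.mpr hx0
            set X := ‖x‖⁻¹ • x with hXdef
            have hXmem : X ∈ I.tang p := Submodule.smul_mem _ _ hx
            have hX1 : ‖X‖ = 1 := by
              rw [hXdef, norm_smul, Real.norm_eq_abs, abs_inv, abs_norm, inv_mul_cancel₀ hc]
            have h := hsq X hXmem hX1
            rw [hXdef] at h
            simp only [map_smul, LinearMap.smul_apply, smul_smul] at h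
            have h5 : (‖x‖ * ‖x‖) • ((‖x‖⁻¹ * ‖x‖⁻¹) • I.sff p x x)
                = (‖x‖ * ‖x‖) • (((n : ℝ) / 2) • I.meanCurv p) := by rw [h]
            rw [smul_smul, smul_smul] at h5
            have hcc : ‖x‖ * ‖x‖ * (‖x‖⁻¹ * ‖x‖⁻¹) = 1 := by field_simp
            rw [hcc, one_smul] at h5
            rw [h5]
            congr 1
            rw [sq]
            ring
        have hpol : ∀ x ∈ I.tang p, ∀ y ∈ I.tang p,
            I.sff p x y = ((n : ℝ) / 2 * ⟪x, y⟫_ℝ) • I.meanCurv p := by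
          intro x hx y hy
          have hxy := hscale (x + y) (Submodule.add_mem _ hx hy)
          have e1 : I.sff p (x + y) (x + y)
              = I.sff p x x + I.sff p x y + I.sff p x y + I.sff p y y := by
            simp only [map_add, LinearMap.add_apply]
            rw [I.sff_symm p y x]
            abel
          rw [e1, hscale x hx, hscale y hy, norm_add_sq_real] at hxy
          have h2 : (2 : ℝ) • I.sff p x y
              = (2 * ((n : ℝ) / 2 * ⟪x, y⟫_ℝ)) • I.meanCurv p := by
            have hre : ((n:ℝ)/2 * (‖x‖^2 + 2 * ⟪x,y⟫_ℝ + ‖y‖^2))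
                = ((n:ℝ)/2 * ‖x‖^2) + (2 * ((n : ℝ) / 2 * ⟪x, y⟫_ℝ)) + ((n:ℝ)/2 * ‖y‖^2) := by
              ring
            rw [hre, add_smul, add_smul] at hxy
            have h3 := add_right_cancel hxy
            rw [add_assoc] at h3
            have h4 := add_left_cancel h3
            rw [two_smul]
            exact h4
          calc I.sff p x y = (2⁻¹ : ℝ) • ((2 : ℝ) • I.sff p x y) := by
                rw [smul_smul]; norm_num
            _ = ((n : ℝ) / 2 * ⟪x, y⟫_ℝ) • I.meanCurv p := by
                rw [h2, smul_smul]
                congr 1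
                ring
        -- mean curvature self-relation
        have htr : (n : ℝ) • I.meanCurv p
            = ((n : ℝ) * ((n : ℝ) / 2)) • I.meanCurv p := by
          rw [nsmul_meanCurv I p hn0]
          rw [Finset.sum_congr rfl fun i _ => by
            rw [hpol _ (hmem p i) _ (hmem p i), hee p i, mul_one]]
          rw [Finset.sum_const, Finset.card_univ, Fintype.card_fin, I.dim_tang p,
            ← Nat.cast_smul_eq_nsmul ℝ, smul_smul]
        by_cases hn2 : n = 2
        · right
          refine ⟨hn2, fun x hx y hy => ?_⟩
          rw [hpol x hx y hy]
          have hn2' : (n : ℝ) = 2 := by rw [hn2]; norm_num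
          rw [hn2']
          norm_num
        · left
          have hcoef : ((n : ℝ) - (n : ℝ) * ((n : ℝ) / 2)) ≠ 0 := by
            have h1 : (n : ℝ) ≠ 0 := Nat.cast_ne_zero.mpr hn0
            have h2 : (n : ℝ) ≠ 2 := by exact_mod_cast fun h => hn2 (by exact_mod_cast h)
            intro hc
            have hmul : (n : ℝ) * (2 - (n : ℝ)) = 0 := by
              have he : (n : ℝ) * (2 - (n : ℝ))
                  = 2 * ((n : ℝ) - (n : ℝ) * ((n : ℝ) / 2)) := by ring
              rw [he, hc, mul_zero]
            rcases mul_eq_zero.mp hmul with h | h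
            · exact h1 h
            · exact h2 (by linarith)
          have hH0 : I.meanCurv p = 0 := by
            have : ((n : ℝ) - (n : ℝ) * ((n : ℝ) / 2)) • I.meanCurv p = 0 := by
              rw [sub_smul, htr, sub_self]
            exact (smul_eq_zero.mp this).resolve_left hcoef
          intro x hx y hy
          rw [hpol x hx y hy, hH0, smul_zero]
    · rintro (hgeo | ⟨hn2, humb⟩) <;> intro X hX hX1
      · -- totally geodesic case
        have hH0 : I.meanCurv p = 0 := by
          rw [ImmersionData.meanCurv]
          rw [Finset.sum_eq_zero fun i _ => hgeo _ (hmem p i) _ (hmem p i), smul_zero]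
        refine (main_est I hsf p hX hX1).2.mpr ⟨?_, ?_⟩
        · have hz : ∀ i : Fin (Module.finrank ℝ (I.tang p)),
              ‖I.sff p X (stdOrthonormalBasis ℝ (I.tang p) i : Euc m)‖ ^ 2 = 0 := fun i => by
            rw [hgeo X hX _ (hmem p i), norm_zero]
            norm_num
          rw [Finset.sum_congr rfl fun i _ => hz i, hgeo X hX X hX, norm_zero]
          simp
        · rw [hgeo X hX X hX, hH0, smul_zero]
      · -- umbilical, n = 2
        have hXX : ⟪X, X⟫_ℝ = 1 := by
          rw [real_inner_self_eq_norm_sq, hX1]; norm_num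
        refine (main_est I hsf p hX hX1).2.mpr ⟨?_, ?_⟩
        · rw [humb X hX X hX, hXX, one_smul]
          have : ∀ i : Fin (Module.finrank ℝ (I.tang p)),
              ‖I.sff p X (stdOrthonormalBasis ℝ (I.tang p) i : Euc m)‖ ^ 2
              = ⟪(stdOrthonormalBasis ℝ (I.tang p) i : Euc m), X⟫_ℝ ^ 2
                * ‖I.meanCurv p‖ ^ 2 := by
            intro i
            rw [humb X hX _ (hmem p i), norm_smul, Real.norm_eq_abs, mul_pow, sq_abs,
              real_inner_comm]
          rw [Finset.sum_congr rfl fun i _ => this i, ← Finset.sum_mul,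
            tang_parseval I p hX, hX1]
          norm_num
        · have hn2' : (n : ℝ) = 2 := by rw [hn2]; norm_num
          rw [humb X hX X hX, hXX, one_smul, hn2']
          norm_num

end
end

section
/- Let x: M → R^m(ε) be an isometric immersion of a Riemannian n-manifold into a Riemannian space form of constant sectional curvature ε. Then, regardless of codimension, for any integer k with 2 ≤ k ≤ n and any point p ∈ M: (1) if θ_k(p) ≠ ε, then the shape operator in the direction of the mean curvature vector satisfies A_H > ((n−1)/n)(θ_k(p) − ε) I at p (i.e., A_H − ((n−1)/n)(θ_k(p) − ε) I is positive definite); (2) if θ_k(p) = ε, then A_H ≥ 0 at p; (3) a unit vector X ∈ T_pM satisfies A_H X = ((n−1)/n)(θ_k(p) − ε) X if and only if θ_k(p) = ε and X lies in the relative null space N_p = {X : h(X,Y) = 0 for all Y ∈ T_pM}; (4) A_H ≡ ((n−1)/n)(θ_k − ε) I at p if and only if p is a totally geodesic point. -/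
open scoped InnerProductSpace RealInnerProductSpace BigOperators

noncomputable section

namespace ImmersionData

variable {n m : ℕ} {Pt : Type*} (I : ImmersionData n m Pt)

/-- The invariant `θ_k(p) = (1/(k-1)) inf_{L^k, X} Ric_{L^k}(X)`, the infimum being taken
over all `k`-plane sections `L^k ⊆ T_pM` (described by an orthonormal family spanning
them) and unit vectors `X ∈ L^k`. -/
def thetaK (k : ℕ) (hk : 0 < k) (p : Pt) : ℝ :=
  (1 / ((k : ℝ) - 1)) * sInf { r : ℝ | ∃ f : Fin k → Euc m,
    Orthonormal ℝ f ∧ (∀ i, f i ∈ I.tang p) ∧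
    r = ∑ j : Fin k, I.indR p (f ⟨0, hk⟩) (f j) (f j) (f ⟨0, hk⟩) }

/-- The bilinear form of the shape operator `A_H` at the mean curvature vector:
`⟨A_H X, Y⟩ = ⟨h(X,Y), H⃗⟩`. -/
def AH (p : Pt) (x y : Euc m) : ℝ := ⟪I.sff p x y, I.meanCurv p⟫_ℝ

end ImmersionData

/-! ### Auxiliary lemmas for Theorem 28.1 -/

/-- Trace of a bilinear map w.r.t. an orthonormal basis is basis independent. -/
lemma trace_indep {E F : Type*} [NormedAddCommGroup E] [InnerProductSpace ℝ E]
    [NormedAddCommGroup F] [NormedSpace ℝ F] {ι ι' : Type*} [Fintype ι] [Fintype ι']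
    (B : E →ₗ[ℝ] E →ₗ[ℝ] F) (b : OrthonormalBasis ι ℝ E) (c : OrthonormalBasis ι' ℝ E) :
    ∑ j, B (c j) (c j) = ∑ i, B (b i) (b i) := by
  classical
  have key : ∀ j, B (c j) (c j)
      = ∑ i, ∑ i', (⟪b i, c j⟫_ℝ * ⟪b i', c j⟫_ℝ) • B (b i) (b i') := by
    intro j
    conv_lhs => rw [← b.sum_repr' (c j)]
    simp only [map_sum, map_smul, LinearMap.coe_sum, Finset.sum_apply,
      LinearMap.smul_apply, Finset.smul_sum, smul_smul]
    rw [Finset.sum_comm]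
    exact Finset.sum_congr rfl fun i _ => Finset.sum_congr rfl fun i' _ => by rw [mul_comm]
  calc ∑ j, B (c j) (c j)
      = ∑ j, ∑ i, ∑ i', (⟪b i, c j⟫_ℝ * ⟪b i', c j⟫_ℝ) • B (b i) (b i') :=
        Finset.sum_congr rfl fun j _ => key j
    _ = ∑ i, ∑ i', (∑ j, ⟪b i, c j⟫_ℝ * ⟪b i', c j⟫_ℝ) • B (b i) (b i') := by
        rw [Finset.sum_comm]
        refine Finset.sum_congr rfl fun i _ => ?_
        rw [Finset.sum_comm]
        exact Finset.sum_congr rfl fun i' _ => (Finset.sum_smul).symm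
    _ = ∑ i, ∑ i', ⟪b i, b i'⟫_ℝ • B (b i) (b i') := by
        refine Finset.sum_congr rfl fun i _ => Finset.sum_congr rfl fun i' _ => ?_
        congr 1
        calc ∑ j, ⟪b i, c j⟫_ℝ * ⟪b i', c j⟫_ℝ
            = ∑ j, ⟪b i, c j⟫_ℝ * ⟪c j, b i'⟫_ℝ := by
              exact Finset.sum_congr rfl fun j _ => by rw [real_inner_comm (b i') (c j)]
          _ = ⟪b i, b i'⟫_ℝ := c.sum_inner_mul_inner _ _
    _ = ∑ i, B (b i) (b i) := by
        simp [orthonormal_iff_ite.mp b.orthonormal, ite_smul]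

namespace ImmersionData

variable {n m : ℕ} {Pt : Type*} (I : ImmersionData n m Pt)

lemma sff_bound (p : Pt) : ∃ C : ℝ, 0 ≤ C ∧ ∀ u v : Euc m, ‖I.sff p u v‖ ≤ C * ‖u‖ * ‖v‖ := by
  let L : Euc m →L[ℝ] Euc m →L[ℝ] Euc m :=
    LinearMap.toContinuousLinearMap
      ((LinearMap.toContinuousLinearMap :
          (Euc m →ₗ[ℝ] Euc m) ≃ₗ[ℝ] Euc m →L[ℝ] Euc m).toLinearMap.comp (I.sff p))
  refine ⟨‖L‖, ContinuousLinearMap.opNorm_nonneg L, fun u v => ?_⟩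
  have h1 : I.sff p u v = L u v := by simp [L]
  rw [h1]
  calc ‖L u v‖ ≤ ‖L u‖ * ‖v‖ := (L u).le_opNorm v
    _ ≤ ‖L‖ * ‖u‖ * ‖v‖ := mul_le_mul_of_nonneg_right (L.le_opNorm u) (norm_nonneg v)

lemma gauss_form {ε : ℝ} (hsf : I.SpaceForm ε) (p : Pt) {x y : Euc m}
    (hx : x ∈ I.tang p) (hy : y ∈ I.tang p) :
    I.indR p x y y x = ε * (‖x‖ ^ 2 * ‖y‖ ^ 2 - ⟪x, y⟫_ℝ ^ 2)
      + ⟪I.sff p x x, I.sff p y y⟫_ℝ - ‖I.sff p x y‖ ^ 2 := by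
  rw [I.gauss p x y y x hx hy hy hx, hsf, real_inner_comm y x, I.sff_symm p y x,
    real_inner_self_eq_norm_sq, real_inner_self_eq_norm_sq, real_inner_self_eq_norm_sq]
  ring

/-- The set of Ricci curvatures appearing in the definition of `thetaK`. -/
def ricSet (k : ℕ) (hk : 0 < k) (p : Pt) : Set ℝ :=
  { r : ℝ | ∃ f : Fin k → Euc m, Orthonormal ℝ f ∧ (∀ i, f i ∈ I.tang p) ∧
    r = ∑ j : Fin k, I.indR p (f ⟨0, hk⟩) (f j) (f j) (f ⟨0, hk⟩) }

lemma thetaK_eq (k : ℕ) (hk : 0 < k) (p : Pt) :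
    I.thetaK k hk p = (1 / ((k : ℝ) - 1)) * sInf (I.ricSet k hk p) := rfl

lemma ric_eval {ε : ℝ} (hsf : I.SpaceForm ε) {k : ℕ} (hk : 0 < k) (p : Pt)
    (g : Fin k → Euc m) (hg : Orthonormal ℝ g) (hgt : ∀ i, g i ∈ I.tang p) :
    ∑ j : Fin k, I.indR p (g ⟨0, hk⟩) (g j) (g j) (g ⟨0, hk⟩)
      = ((k : ℝ) - 1) * ε + ∑ j : Fin k,
          (⟪I.sff p (g ⟨0, hk⟩) (g ⟨0, hk⟩), I.sff p (g j) (g j)⟫_ℝ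
            - ‖I.sff p (g ⟨0, hk⟩) (g j)‖ ^ 2) := by
  classical
  have hterm : ∀ j, I.indR p (g ⟨0, hk⟩) (g j) (g j) (g ⟨0, hk⟩)
      = (ε - if (⟨0, hk⟩ : Fin k) = j then ε else 0)
        + (⟪I.sff p (g ⟨0, hk⟩) (g ⟨0, hk⟩), I.sff p (g j) (g j)⟫_ℝ
            - ‖I.sff p (g ⟨0, hk⟩) (g j)‖ ^ 2) := by
    intro j
    rw [I.gauss_form hsf p (hgt _) (hgt j), hg.1, hg.1, orthonormal_iff_ite.mp hg]
    split <;> ring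
  rw [Finset.sum_congr rfl fun j _ => hterm j, Finset.sum_add_distrib]
  congr 1
  rw [Finset.sum_sub_distrib, Finset.sum_const, Finset.sum_ite_eq, Finset.card_univ]
  simp [nsmul_eq_mul]
  ring

lemma ricSet_bddBelow {ε : ℝ} (hsf : I.SpaceForm ε) {k : ℕ} (hk : 0 < k) (p : Pt) :
    BddBelow (I.ricSet k hk p) := by
  obtain ⟨C, hC0, hC⟩ := I.sff_bound p
  refine ⟨((k : ℝ) - 1) * ε - (k : ℝ) * (2 * C ^ 2), ?_⟩
  rintro r ⟨g, hg, hgt, rfl⟩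
  rw [I.ric_eval hsf hk p g hg hgt]
  have hb : ∀ j : Fin k, -(2 * C ^ 2) ≤
      ⟪I.sff p (g ⟨0, hk⟩) (g ⟨0, hk⟩), I.sff p (g j) (g j)⟫_ℝ
        - ‖I.sff p (g ⟨0, hk⟩) (g j)‖ ^ 2 := by
    intro j
    have hn : ∀ i i' : Fin k, ‖I.sff p (g i) (g i')‖ ≤ C := by
      intro i i'
      have := hC (g i) (g i')
      rwa [hg.1, hg.1, mul_one, mul_one] at this
    have h1 := hn ⟨0, hk⟩ ⟨0, hk⟩
    have h2 := hn j j
    have h3 := hn ⟨0, hk⟩ j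
    have h4 := abs_le.mp
      (abs_real_inner_le_norm (I.sff p (g ⟨0, hk⟩) (g ⟨0, hk⟩)) (I.sff p (g j) (g j)))
    nlinarith [norm_nonneg (I.sff p (g ⟨0, hk⟩) (g ⟨0, hk⟩)),
      norm_nonneg (I.sff p (g j) (g j)), norm_nonneg (I.sff p (g ⟨0, hk⟩) (g j))]
  have hs := Finset.card_nsmul_le_sum Finset.univ _ _ (fun j _ => hb j)
  simp only [Finset.card_univ, Fintype.card_fin, nsmul_eq_mul] at hs
  nlinarith [hs]

lemma ricSet_nonempty {k : ℕ} (hk : 0 < k) (hkn : k ≤ n) (p : Pt) :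
    (I.ricSet k hk p).Nonempty := by
  let b : OrthonormalBasis (Fin n) ℝ ↥(I.tang p) :=
    (stdOrthonormalBasis ℝ ↥(I.tang p)).reindex (finCongr (I.dim_tang p))
  have hbo : Orthonormal ℝ (fun i : Fin n => (b i : Euc m)) :=
    b.orthonormal.comp_linearIsometry (I.tang p).subtypeₗᵢ
  exact ⟨_, fun j : Fin k => (b (Fin.castLE hkn j) : Euc m),
    hbo.comp _ (Fin.castLE_injective hkn), fun i => SetLike.coe_mem _, rfl⟩

lemma sum_sff_diag (hn : 0 < n) (p : Pt) (b : OrthonormalBasis (Fin n) ℝ ↥(I.tang p)) :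
    ∑ i : Fin n, I.sff p (b i : Euc m) (b i : Euc m) = (n : ℝ) • I.meanCurv p := by
  let B : ↥(I.tang p) →ₗ[ℝ] ↥(I.tang p) →ₗ[ℝ] Euc m :=
    ((I.sff p).comp (I.tang p).subtype).compl₂ (I.tang p).subtype
  have h2 := trace_indep B b (stdOrthonormalBasis ℝ ↥(I.tang p))
  have h3 : I.meanCurv p = (n : ℝ)⁻¹ •
      ∑ i, B (stdOrthonormalBasis ℝ ↥(I.tang p) i) (stdOrthonormalBasis ℝ ↥(I.tang p) i) := rfl
  have h1 : ∑ i : Fin n, I.sff p (b i : Euc m) (b i : Euc m) = ∑ i, B (b i) (b i) := rfl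
  rw [h1, ← h2, h3, smul_smul, mul_inv_cancel₀, one_smul]
  exact_mod_cast hn.ne'

lemma master {ε : ℝ} (hsf : I.SpaceForm ε) {k : ℕ} (hk2 : 2 ≤ k) (hkn : k ≤ n)
    (hk : 0 < k) (p : Pt) {X : Euc m} (hX : X ∈ I.tang p) (hX1 : ‖X‖ = 1) :
    ∃ b : OrthonormalBasis (Fin n) ℝ ↥(I.tang p),
      ((b ⟨0, hk.trans_le hkn⟩ : Euc m) = X) ∧
      ((n : ℝ) - 1) * (I.thetaK k hk p - ε)
        ≤ (n : ℝ) * I.AH p X X - ∑ j : Fin n, ‖I.sff p X (b j : Euc m)‖ ^ 2 := by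
  classical
  obtain ⟨k'', rfl⟩ : ∃ a, k = a + 2 := ⟨k - 2, by omega⟩
  obtain ⟨n'', rfl⟩ : ∃ a, n = a + 2 := ⟨n - 2, by omega⟩
  -- build an orthonormal basis of the tangent space starting with X
  have hcard : Module.finrank ℝ ↥(I.tang p) = Fintype.card (Fin (n'' + 2)) := by
    simp [I.dim_tang p]
  set X' : ↥(I.tang p) := ⟨X, hX⟩ with hX'def
  have hX'1 : ‖X'‖ = 1 := by
    rw [← hX1]; exact (Submodule.norm_coe X').symm
  have horth : Orthonormal ℝ
      (Set.restrict {(0 : Fin (n'' + 2))} (fun _ : Fin (n'' + 2) => X')) := by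
    constructor
    · intro i
      exact hX'1
    · intro i j hij
      exact absurd (Subtype.ext ((Set.mem_singleton_iff.mp i.2).trans
        (Set.mem_singleton_iff.mp j.2).symm)) hij
  obtain ⟨b, hb⟩ := horth.exists_orthonormalBasis_extension_of_card_eq hcard
  have hb0 : (b 0 : Euc m) = X := by rw [hb 0 (Set.mem_singleton _)]
  have hmk0 : (⟨0, (hk.trans_le hkn : 0 < n'' + 2)⟩ : Fin (n'' + 2)) = 0 := by
    exact Fin.ext (by simp)
  have hmk0' : (⟨0, hk⟩ : Fin (k'' + 2)) = 0 := Fin.ext (by simp)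
  refine ⟨b, by rw [hmk0, hb0], ?_⟩
  set F : Fin (n'' + 2) → Euc m := fun i => (b i : Euc m) with hFdef
  have hF : Orthonormal ℝ F := b.orthonormal.comp_linearIsometry (I.tang p).subtypeₗᵢ
  have hFt : ∀ i, F i ∈ I.tang p := fun i => (b i).2
  have hF0 : F 0 = X := hb0
  set φ : Fin (n'' + 2) → ℝ := fun a =>
    ⟪I.sff p X X, I.sff p (F a) (F a)⟫_ℝ - ‖I.sff p X (F a)‖ ^ 2 with hφdef
  have hφ0 : φ 0 = 0 := by
    simp only [hφdef, hF0]
    rw [real_inner_self_eq_norm_sq]; ring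
  have hle : (k'' + 1 : ℕ) ≤ n'' + 1 := by omega
  set σ : Fin (n'' + 1) → Fin (k'' + 2) → Fin (n'' + 2) := fun t =>
    Fin.cons 0 (fun j : Fin (k'' + 1) => Fin.succ (t + Fin.castLE hle j)) with hσdef
  have hσinj : ∀ t, Function.Injective (σ t) := by
    intro t
    rw [hσdef]
    rw [Fin.cons_injective_iff]
    refine ⟨?_, (Fin.succ_injective _).comp
      ((add_right_injective t).comp (Fin.castLE_injective hle))⟩
    rintro ⟨j, hj⟩
    exact Fin.succ_ne_zero _ hj
  have hσ0 : ∀ t, σ t 0 = 0 := fun t => by rw [hσdef]; exact Fin.cons_zero _ _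
  have hσs : ∀ t j, σ t (Fin.succ j) = Fin.succ (t + Fin.castLE hle j) := fun t j => by
    rw [hσdef]; exact Fin.cons_succ _ _ _
  have hbdd := I.ricSet_bddBelow hsf hk p
  have hmem : ∀ t, (∑ j : Fin (k'' + 2),
      I.indR p (F (σ t ⟨0, hk⟩)) (F (σ t j)) (F (σ t j)) (F (σ t ⟨0, hk⟩)))
        ∈ I.ricSet (k'' + 2) hk p :=
    fun t => ⟨fun j => F (σ t j), hF.comp (σ t) (hσinj t), fun i => hFt _, rfl⟩
  have hval : ∀ t, (∑ j : Fin (k'' + 2),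
      I.indR p (F (σ t ⟨0, hk⟩)) (F (σ t j)) (F (σ t j)) (F (σ t ⟨0, hk⟩)))
        = (((k'' + 2 : ℕ) : ℝ) - 1) * ε
          + ∑ j : Fin (k'' + 1), φ (Fin.succ (t + Fin.castLE hle j)) := by
    intro t
    rw [I.ric_eval hsf hk p (fun j => F (σ t j)) (hF.comp (σ t) (hσinj t)) (fun i => hFt _)]
    congr 1
    have h0 : F (σ t ⟨0, hk⟩) = X := by rw [hmk0', hσ0, hF0]
    have hstep : ∀ j, ⟪I.sff p (F (σ t ⟨0, hk⟩)) (F (σ t ⟨0, hk⟩)),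
        I.sff p (F (σ t j)) (F (σ t j))⟫_ℝ - ‖I.sff p (F (σ t ⟨0, hk⟩)) (F (σ t j))‖ ^ 2
          = φ (σ t j) := by
      intro j; rw [h0]
    rw [Finset.sum_congr rfl fun j _ => hstep j, Fin.sum_univ_succ, hσ0, hφ0, zero_add]
    exact Finset.sum_congr rfl fun j _ => by rw [hσs]
  have hsInf_le : ∀ t : Fin (n'' + 1), sInf (I.ricSet (k'' + 2) hk p)
      ≤ (((k'' + 2 : ℕ) : ℝ) - 1) * ε
        + ∑ j : Fin (k'' + 1), φ (Fin.succ (t + Fin.castLE hle j)) :=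
    fun t => (hval t) ▸ csInf_le hbdd (hmem t)
  have hsum := Finset.card_nsmul_le_sum (Finset.univ : Finset (Fin (n'' + 1))) _ _
    (fun t _ => hsInf_le t)
  simp only [Finset.card_univ, Fintype.card_fin, nsmul_eq_mul] at hsum
  have hswap : ∑ t : Fin (n'' + 1), ∑ j : Fin (k'' + 1), φ (Fin.succ (t + Fin.castLE hle j))
      = ((k'' + 1 : ℕ) : ℝ) * ∑ t : Fin (n'' + 1), φ (Fin.succ t) := by
    rw [Finset.sum_comm]
    have hj : ∀ j : Fin (k'' + 1), ∑ t : Fin (n'' + 1), φ (Fin.succ (t + Fin.castLE hle j))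
        = ∑ t : Fin (n'' + 1), φ (Fin.succ t) := fun j =>
      Fintype.sum_equiv (Equiv.addRight (Fin.castLE hle j)) _ _ (fun t => rfl)
    rw [Finset.sum_congr rfl fun j _ => hj j, Finset.sum_const, Finset.card_univ,
      Fintype.card_fin, nsmul_eq_mul]
  have hφsum : ∑ t : Fin (n'' + 1), φ (Fin.succ t) = ∑ a : Fin (n'' + 2), φ a := by
    rw [Fin.sum_univ_succ φ, hφ0, zero_add]
  have hφtot : ∑ a : Fin (n'' + 2), φ a
      = ((n'' + 2 : ℕ) : ℝ) * I.AH p X X - ∑ a : Fin (n'' + 2), ‖I.sff p X (F a)‖ ^ 2 := by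
    have h1 : ∑ a : Fin (n'' + 2), ⟪I.sff p X X, I.sff p (F a) (F a)⟫_ℝ
        = ((n'' + 2 : ℕ) : ℝ) * I.AH p X X := by
      rw [← inner_sum]
      have hd : ∑ a : Fin (n'' + 2), I.sff p (F a) (F a)
          = ((n'' + 2 : ℕ) : ℝ) • I.meanCurv p := I.sum_sff_diag (by omega) p b
      rw [hd, real_inner_smul_right, ImmersionData.AH]
    rw [hφdef]
    rw [Finset.sum_sub_distrib, h1]
  -- put everything together
  have hθ : sInf (I.ricSet (k'' + 2) hk p)
      = (((k'' + 2 : ℕ) : ℝ) - 1) * I.thetaK (k'' + 2) hk p := by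
    have hne : ((k'' + 2 : ℕ) : ℝ) - 1 ≠ 0 := by
      intro h
      push_cast at h
      linarith [Nat.cast_nonneg (α := ℝ) k'']
    rw [I.thetaK_eq, ← mul_assoc, mul_one_div, div_self hne, one_mul]
  rw [hθ, Finset.sum_add_distrib, Finset.sum_const, Finset.card_univ, Fintype.card_fin,
    nsmul_eq_mul, hswap, hφsum, hφtot] at hsum
  have hc : (0 : ℝ) < ((k'' + 1 : ℕ) : ℝ) := by positivity
  set θ := I.thetaK (k'' + 2) hk p
  set A := I.AH p X X
  set Sq := ∑ a : Fin (n'' + 2), ‖I.sff p X (F a)‖ ^ 2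
  have h2 : ((k'' + 1 : ℕ) : ℝ) * (((n'' + 1 : ℕ) : ℝ) * (θ - ε))
      ≤ ((k'' + 1 : ℕ) : ℝ) * (((n'' + 2 : ℕ) : ℝ) * A - Sq) := by
    push_cast at hsum ⊢
    nlinarith [hsum]
  have h3 := le_of_mul_le_mul_left h2 hc
  push_cast at h3 ⊢
  linarith

lemma central {ε : ℝ} (hsf : I.SpaceForm ε) {k : ℕ} (hk2 : 2 ≤ k) (hkn : k ≤ n)
    (hk : 0 < k) (p : Pt) {X : Euc m} (hX : X ∈ I.tang p) (hX1 : ‖X‖ = 1) :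
    ((n : ℝ) - 1) / n * (I.thetaK k hk p - ε) ≤ I.AH p X X ∧
      (I.AH p X X = ((n : ℝ) - 1) / n * (I.thetaK k hk p - ε) →
        I.thetaK k hk p = ε ∧ ∀ Y ∈ I.tang p, I.sff p X Y = 0) := by
  obtain ⟨b, hb0, hineq⟩ := I.master hsf hk2 hkn hk p hX hX1
  have hn2 : (2 : ℝ) ≤ (n : ℝ) := by exact_mod_cast hk2.trans hkn
  have hnR : (0 : ℝ) < n := by linarith
  have hS0 : 0 ≤ ∑ j : Fin n, ‖I.sff p X (b j : Euc m)‖ ^ 2 :=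
    Finset.sum_nonneg fun j _ => sq_nonneg _
  constructor
  · rw [div_mul_eq_mul_div, div_le_iff₀ hnR]
    nlinarith
  · intro heq
    have h2 : (n : ℝ) * I.AH p X X = ((n : ℝ) - 1) * (I.thetaK k hk p - ε) := by
      rw [heq]; field_simp
    have hS : ∑ j : Fin n, ‖I.sff p X (b j : Euc m)‖ ^ 2 = 0 := by linarith
    have hz : ∀ j : Fin n, I.sff p X (b j : Euc m) = 0 := by
      intro j
      have hj := (Finset.sum_eq_zero_iff_of_nonneg
        (fun j _ => sq_nonneg _)).mp hS j (Finset.mem_univ j)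
      have := pow_eq_zero_iff (n := 2) (by norm_num) |>.mp hj
      exact norm_eq_zero.mp this
    have hnull : ∀ Y ∈ I.tang p, I.sff p X Y = 0 := by
      intro Y hY
      have hrepr := b.sum_repr' (⟨Y, hY⟩ : ↥(I.tang p))
      have hY' : Y = ∑ i : Fin n, ⟪(b i : Euc m), Y⟫_ℝ • (b i : Euc m) := by
        have h5 := congrArg (Submodule.subtype (I.tang p)) hrepr
        simpa [map_sum, map_smul, Submodule.coe_inner] using h5.symm
      rw [hY', map_sum]
      simp [map_smul, hz]
    refine ⟨?_, hnull⟩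
    have hA0 : I.AH p X X = 0 := by
      rw [ImmersionData.AH, hnull X hX, inner_zero_left]
    rw [hA0, mul_zero] at h2
    have h6 : I.thetaK k hk p - ε = 0 := by
      rcases mul_eq_zero.mp h2.symm with h | h
      · linarith
      · exact h
    linarith

lemma tg_theta {ε : ℝ} (hsf : I.SpaceForm ε) {k : ℕ} (hk2 : 2 ≤ k) (hkn : k ≤ n)
    (hk : 0 < k) (p : Pt) (htg : I.TotallyGeodesicAt p) : I.thetaK k hk p = ε := by
  have hval : ∀ r ∈ I.ricSet k hk p, r = ((k : ℝ) - 1) * ε := by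
    rintro r ⟨g, hg, hgt, rfl⟩
    rw [I.ric_eval hsf hk p g hg hgt]
    have hterm : ∀ j : Fin k, (⟪I.sff p (g ⟨0, hk⟩) (g ⟨0, hk⟩),
        I.sff p (g j) (g j)⟫_ℝ - ‖I.sff p (g ⟨0, hk⟩) (g j)‖ ^ 2) = 0 := by
      intro j
      have h0 : ∀ i i' : Fin k, I.sff p (g i) (g i') = 0 := fun i i' => htg _ (hgt i) _ (hgt i')
      simp [h0]
    rw [Finset.sum_congr rfl fun j _ => hterm j, Finset.sum_const_zero, add_zero]
  obtain ⟨r, hr⟩ := I.ricSet_nonempty hk hkn p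
  have hset : I.ricSet k hk p = {((k : ℝ) - 1) * ε} := by
    apply Set.Subset.antisymm
    · intro s hs; exact hval s hs
    · intro s hs
      rw [Set.mem_singleton_iff] at hs
      rw [hs, ← hval r hr]
      exact hr
  have hk1 : (k : ℝ) - 1 ≠ 0 := by
    have h2 : (2 : ℝ) ≤ (k : ℝ) := by exact_mod_cast hk2
    intro h; linarith
  rw [I.thetaK_eq, hset, csInf_singleton, ← mul_assoc, one_div, inv_mul_cancel₀ hk1, one_mul]

end ImmersionData

/-- **Theorem 28.1 (Chen)**: let `x : M → Rᵐ(ε)` be an isometric immersion of a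
Riemannian `n`-manifold into a space form of constant curvature `ε`.  Then, regardless of
codimension, for any `2 ≤ k ≤ n` and any point `p`:
(1) if `θ_k(p) ≠ ε` then `A_H > ((n-1)/n)(θ_k(p) - ε) I` at `p` (positive definiteness);
(2) if `θ_k(p) = ε` then `A_H ≥ 0` at `p`;
(3) a unit tangent vector `X` satisfies `A_H X = ((n-1)/n)(θ_k(p) - ε) X` iff
`θ_k(p) = ε` and `X` lies in the relative null space at `p`;
(4) `A_H ≡ ((n-1)/n)(θ_k - ε) I` at `p` iff `p` is a totally geodesic point. -/
theorem thetaK_shape_operator {n m : ℕ} {Pt : Type*} (I : ImmersionData n m Pt)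
    (ε : ℝ) (hsf : I.SpaceForm ε) (k : ℕ) (hk2 : 2 ≤ k) (hkn : k ≤ n)
    (hk : 0 < k) (p : Pt) :
    ((I.thetaK k hk p ≠ ε → ∀ X ∈ I.tang p, X ≠ 0 →
      ((n : ℝ) - 1) / (n : ℝ) * (I.thetaK k hk p - ε) * ‖X‖ ^ 2 < I.AH p X X) ∧
    (I.thetaK k hk p = ε → ∀ X ∈ I.tang p, 0 ≤ I.AH p X X) ∧
    (∀ X ∈ I.tang p, ‖X‖ = 1 →
      ((∀ Y ∈ I.tang p,
          I.AH p X Y = ((n : ℝ) - 1) / (n : ℝ) * (I.thetaK k hk p - ε) * ⟪X, Y⟫_ℝ) ↔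
        (I.thetaK k hk p = ε ∧ ∀ Y ∈ I.tang p, I.sff p X Y = 0))) ∧
    ((∀ X ∈ I.tang p, ∀ Y ∈ I.tang p,
        I.AH p X Y = ((n : ℝ) - 1) / (n : ℝ) * (I.thetaK k hk p - ε) * ⟪X, Y⟫_ℝ) ↔
      I.TotallyGeodesicAt p)) := by
  have hn2 : 2 ≤ n := hk2.trans hkn
  have hnC : (2 : ℝ) ≤ (n : ℝ) := by exact_mod_cast hn2
  have hnR : (0 : ℝ) < n := by linarith
  have hsff_smul : ∀ (s : ℝ) (u Y : Euc m), I.sff p (s • u) Y = s • I.sff p u Y := by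
    intro s u Y; rw [map_smul, LinearMap.smul_apply]
  have hAH_scale : ∀ (s t : ℝ) (u v : Euc m),
      I.AH p (s • u) (t • v) = s * t * I.AH p u v := by
    intro s t u v
    simp only [ImmersionData.AH, hsff_smul, map_smul, LinearMap.smul_apply, smul_smul,
      real_inner_smul_left]
    ring
  have hAH_zero : I.AH p 0 0 = 0 := by
    simp [ImmersionData.AH]
  have hcen := fun (X : Euc m) (hX : X ∈ I.tang p) (hX1 : ‖X‖ = 1) =>
    I.central hsf hk2 hkn hk p hX hX1
  have P3 : ∀ X ∈ I.tang p, ‖X‖ = 1 →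
      ((∀ Y ∈ I.tang p,
          I.AH p X Y = ((n : ℝ) - 1) / (n : ℝ) * (I.thetaK k hk p - ε) * ⟪X, Y⟫_ℝ) ↔
        (I.thetaK k hk p = ε ∧ ∀ Y ∈ I.tang p, I.sff p X Y = 0)) := by
    intro X hX hX1
    constructor
    · intro hyp
      have h1 : I.AH p X X = ((n : ℝ) - 1) / n * (I.thetaK k hk p - ε) := by
        rw [hyp X hX, real_inner_self_eq_norm_sq, hX1]; ring
      exact (hcen X hX hX1).2 h1
    · rintro ⟨hθe, hnull⟩ Y hY
      rw [ImmersionData.AH, hnull Y hY, inner_zero_left, hθe]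
      ring
  have P1 : I.thetaK k hk p ≠ ε → ∀ X ∈ I.tang p, X ≠ 0 →
      ((n : ℝ) - 1) / (n : ℝ) * (I.thetaK k hk p - ε) * ‖X‖ ^ 2 < I.AH p X X := by
    intro hθ X hX hX0
    have hs : (0 : ℝ) < ‖X‖ := norm_pos_iff.mpr hX0
    set u : Euc m := ‖X‖⁻¹ • X with hu
    have huT : u ∈ I.tang p := Submodule.smul_mem _ _ hX
    have hu1 : ‖u‖ = 1 := by
      rw [hu, norm_smul, norm_inv, norm_norm]; exact inv_mul_cancel₀ hs.ne'
    have hXu : X = ‖X‖ • u := by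
      rw [hu, smul_smul, mul_inv_cancel₀ hs.ne', one_smul]
    obtain ⟨hle, heq⟩ := hcen u huT hu1
    have hlt : ((n : ℝ) - 1) / n * (I.thetaK k hk p - ε) < I.AH p u u := by
      rcases lt_or_eq_of_le hle with h | h
      · exact h
      · exact absurd (heq h.symm).1 hθ
    calc ((n : ℝ) - 1) / n * (I.thetaK k hk p - ε) * ‖X‖ ^ 2
        < I.AH p u u * ‖X‖ ^ 2 := mul_lt_mul_of_pos_right hlt (by positivity)
      _ = I.AH p X X := by
          have h2 := hAH_scale ‖X‖ ‖X‖ u u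
          rw [← hXu] at h2
          rw [h2]; ring
  have P2 : I.thetaK k hk p = ε → ∀ X ∈ I.tang p, 0 ≤ I.AH p X X := by
    intro hθe X hX
    by_cases hX0 : X = 0
    · rw [hX0, hAH_zero]
    · have hs : (0 : ℝ) < ‖X‖ := norm_pos_iff.mpr hX0
      set u : Euc m := ‖X‖⁻¹ • X with hu
      have huT : u ∈ I.tang p := Submodule.smul_mem _ _ hX
      have hu1 : ‖u‖ = 1 := by
        rw [hu, norm_smul, norm_inv, norm_norm]; exact inv_mul_cancel₀ hs.ne'
      have hXu : X = ‖X‖ • u := by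
        rw [hu, smul_smul, mul_inv_cancel₀ hs.ne', one_smul]
      have hle := (hcen u huT hu1).1
      rw [hθe, sub_self, mul_zero] at hle
      have h2 : I.AH p X X = I.AH p u u * ‖X‖ ^ 2 := by
        have h2' := hAH_scale ‖X‖ ‖X‖ u u
        rw [← hXu] at h2'
        rw [h2']; ring
      rw [h2]
      exact mul_nonneg hle (sq_nonneg _)
  have P4 : (∀ X ∈ I.tang p, ∀ Y ∈ I.tang p,
      I.AH p X Y = ((n : ℝ) - 1) / (n : ℝ) * (I.thetaK k hk p - ε) * ⟪X, Y⟫_ℝ) ↔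
      I.TotallyGeodesicAt p := by
    constructor
    · intro hyp X hX Y hY
      by_cases hX0 : X = 0
      · rw [hX0, map_zero, LinearMap.zero_apply]
      · have hs : (0 : ℝ) < ‖X‖ := norm_pos_iff.mpr hX0
        set u : Euc m := ‖X‖⁻¹ • X with hu
        have huT : u ∈ I.tang p := Submodule.smul_mem _ _ hX
        have hu1 : ‖u‖ = 1 := by
          rw [hu, norm_smul, norm_inv, norm_norm]; exact inv_mul_cancel₀ hs.ne'
        have hXu : X = ‖X‖ • u := by
          rw [hu, smul_smul, mul_inv_cancel₀ hs.ne', one_smul]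
        have hyp_u : ∀ Z ∈ I.tang p,
            I.AH p u Z = ((n : ℝ) - 1) / (n : ℝ) * (I.thetaK k hk p - ε) * ⟪u, Z⟫_ℝ := by
          intro Z hZ
          have h1 : I.AH p u Z = ‖X‖⁻¹ * I.AH p X Z := by
            rw [hu, ImmersionData.AH, ImmersionData.AH, map_smul, LinearMap.smul_apply,
              real_inner_smul_left]
          rw [h1, hyp X hX Z hZ, hu, real_inner_smul_left]; ring
        have hnull := ((P3 u huT hu1).mp hyp_u).2
        have h3 : I.sff p X Y = ‖X‖ • I.sff p u Y := by
          have h3' := hsff_smul ‖X‖ u Y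
          rw [← hXu] at h3'
          exact h3'
        rw [h3, hnull Y hY, smul_zero]
    · intro htg X hX Y hY
      rw [ImmersionData.AH, htg X hX Y hY, inner_zero_left,
        I.tg_theta hsf hk2 hkn hk p htg]
      ring
  exact ⟨P1, P2, P3, P4⟩


end
end

section
/- For every integer n ≥ 2, the cardinality of 𝒮(n) equals p(n) − 1, where p(n) is the number of partitions of n; that is, the number of multisets of integers, each element being at least 2 and strictly less than n, whose sum is at most n (the empty multiset included), equals p(n) − 1. -/
open Multiset

lemma part_eq_n_iff {n : ℕ} (p : Nat.Partition n) (hp : n ∈ p.parts) :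
    p = Nat.Partition.indiscrete n := by
  have hn : n ≠ 0 := by
    intro h; subst h; exact absurd (p.parts_pos hp) (by omega)
  ext1
  rw [Nat.Partition.indiscrete_parts hn]
  have h1 : (p.parts.erase n).sum = 0 := by
    have hps := p.parts_sum
    have he := Multiset.sum_erase hp
    omega
  have h2 : p.parts.erase n = 0 := by
    rw [Multiset.sum_eq_zero_iff] at h1
    refine Multiset.eq_zero_of_forall_notMem (fun a ha => ?_)
    have := p.parts_pos (Multiset.mem_of_mem_erase ha)
    have := h1 a ha
    omega
  have := Multiset.cons_erase hp
  rw [h2] at this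
  exact this.symm

noncomputable def SEquiv (n : ℕ) (hn : 2 ≤ n) :
    {l : Multiset ℕ // (∀ a ∈ l, 2 ≤ a ∧ a < n) ∧ l.sum ≤ n} ≃
      {p : Nat.Partition n // p ≠ Nat.Partition.indiscrete n} where
  toFun l := ⟨{ parts := l.1 + Multiset.replicate (n - l.1.sum) 1
                parts_pos := by
                  intro i hi
                  rcases Multiset.mem_add.1 hi with h | h
                  · have := l.2.1 i h; omega
                  · have := Multiset.eq_of_mem_replicate h; omega
                parts_sum := by
                  rw [Multiset.sum_add, Multiset.sum_replicate, smul_eq_mul, mul_one]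
                  have := l.2.2; omega }, by
      intro h
      have hp := congrArg Nat.Partition.parts h
      rw [Nat.Partition.indiscrete_parts (by omega)] at hp
      have hmem : n ∈ l.1 + Multiset.replicate (n - l.1.sum) 1 := by
        rw [show (l.1 + Multiset.replicate (n - l.1.sum) 1) = {n} from hp]
        exact Multiset.mem_singleton_self n
      rcases Multiset.mem_add.1 hmem with h' | h'
      · have := l.2.1 n h'; omega
      · have := Multiset.eq_of_mem_replicate h'; omega⟩
  invFun p := ⟨p.1.parts.filter (2 ≤ ·), by
    constructor
    · intro a ha
      have h2 := Multiset.of_mem_filter ha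
      have hmem := Multiset.mem_of_mem_filter ha
      refine ⟨h2, ?_⟩
      rcases lt_or_eq_of_le (Multiset.single_le_sum (fun x hx => Nat.zero_le x) a hmem) with h | h
      · rwa [p.1.parts_sum] at h
      · exfalso
        apply p.2
        apply part_eq_n_iff
        have han : a = n := by rw [h, p.1.parts_sum]
        subst han
        exact hmem
    · obtain ⟨u, hu⟩ := Multiset.le_iff_exists_add.1 (Multiset.filter_le (2 ≤ ·) p.1.parts)
      have hps := p.1.parts_sum
      rw [hu, Multiset.sum_add] at hps
      omega⟩
  left_inv l := by
    ext : 1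
    simp only [Multiset.filter_add]
    rw [Multiset.filter_eq_self.2 (fun a ha => (l.2.1 a ha).1),
      Multiset.filter_eq_nil.2 (by intro a ha; have := Multiset.eq_of_mem_replicate ha; omega)]
    simp
  right_inv p := by
    ext : 1
    apply Nat.Partition.ext
    simp only
    have hsplit := Multiset.filter_add_not (2 ≤ ·) p.1.parts
    have hrep : p.1.parts.filter (fun a => ¬ 2 ≤ a) =
        Multiset.replicate (p.1.parts.filter (fun a => ¬ 2 ≤ a)).card 1 := by
      rw [Multiset.eq_replicate_card]
      intro a ha
      have h1 := Multiset.of_mem_filter ha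
      have h2 := p.1.parts_pos (Multiset.mem_of_mem_filter ha)
      omega
    have hcard : (p.1.parts.filter (fun a => ¬ 2 ≤ a)).card = n - (p.1.parts.filter (2 ≤ ·)).sum := by
      have hs : (p.1.parts.filter (2 ≤ ·)).sum + (p.1.parts.filter (fun a => ¬ 2 ≤ a)).sum = n := by
        rw [← Multiset.sum_add, hsplit, p.1.parts_sum]
      have : (p.1.parts.filter (fun a => ¬ 2 ≤ a)).sum
          = (p.1.parts.filter (fun a => ¬ 2 ≤ a)).card := by
        conv_lhs => rw [hrep]
        simp
      omega
    conv_rhs => rw [← hsplit]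
    rw [hrep, hcard]
  
/-- The cardinality of `𝒮(n)` equals `p(n) - 1` (Chen): for every `n ≥ 2`, the number of
multisets of integers, each element being at least `2` and strictly less than `n`, whose
sum is at most `n` (the empty multiset included), equals the number of partitions of `n`
minus one. -/
theorem card_S_eq_partition_sub_one (n : ℕ) (hn : 2 ≤ n) :
    {l : Multiset ℕ | (∀ a ∈ l, 2 ≤ a ∧ a < n) ∧ l.sum ≤ n}.ncard =
      Fintype.card (Nat.Partition n) - 1 := by
  have h1 : {l : Multiset ℕ | (∀ a ∈ l, 2 ≤ a ∧ a < n) ∧ l.sum ≤ n}.ncard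
      = Nat.card {p : Nat.Partition n // p ≠ Nat.Partition.indiscrete n} := by
    rw [← Nat.card_coe_set_eq]
    exact Nat.card_congr (SEquiv n hn)
  rw [h1, Nat.card_eq_fintype_card, Fintype.card_subtype_compl, Fintype.card_subtype_eq]
end
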